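/- arXiv:1503.04418 — 2 statements merged into one kernel-verified Lean document; each statement's English description precedes it below -/
import Mathlib

section
/- Let F be a field of characteristic 2 and let R be a finite-dimensional totally singular conic F-algebra. If L is a subfield of R containing F (a subalgebra of R that is a field), then r_L(R) + r_F(L) = r_F(R), where R is regarded as an L-algebra via the inclusion L ⊆ R. -/
/-!
A totally singular conic algebra `R` is local: the kernel `m` of any surjection onto a field `K`
consists of square-zero elements, and `K` is purely inseparable of exponent one over `F`, so that
`[K : F] = 2 ^ r_F(K)` (adjoining an element outside a subfield doubles the degree). This gives the
rank formula `r_F(R) = r_F(K) + μ(m)`, where `μ(m)` is the least number of generators of the ideal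
`m`. Lifts of generators of `K` together with generators of `m` generate `R` because `m` is
nilpotent. Conversely, a generating set of `R` contains `r_F(K)` elements generating a subalgebra
that maps isomorphically onto `K`; correcting the remaining generators by elements of that
subalgebra yields generators of `m`. As `μ(m)` does not depend on the base field, the theorem
reduces to `r_F(K) = r_F(L) + r_L(K)`, i.e. to the multiplicativity of degrees in `F ⊆ L ⊆ K`.
-/

/-- The minimum rank of a finite-dimensional `F`-algebra `R`: the least cardinality of a
subset of `R` generating `R` as an `F`-algebra. -/
noncomputable def minRank (F R : Type*) [CommSemiring F] [Semiring R] [Algebra F R] : ℕ :=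
  sInf {n : ℕ | ∃ s : Finset R, s.card = n ∧ Algebra.adjoin F (s : Set R) = ⊤}

open Module Polynomial IntermediateField

def IsTotallySingular (F R : Type*) [CommSemiring F] [Semiring R] [Algebra F R] : Prop :=
  ∀ x : R, ∃ a : F, x ^ 2 = algebraMap F R a

section minRank

variable {F R : Type*} [CommSemiring F] [Semiring R] [Algebra F R]

theorem minRank_le_card {s : Finset R} (hs : Algebra.adjoin F (s : Set R) = ⊤) :
    minRank F R ≤ s.card :=
  Nat.sInf_le ⟨s, rfl, hs⟩

theorem exists_card_eq_minRank [Algebra.FiniteType F R] :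
    ∃ s : Finset R, s.card = minRank F R ∧ Algebra.adjoin F (s : Set R) = ⊤ := by
  obtain ⟨s, hs⟩ := Algebra.FiniteType.out (R := F) (A := R)
  exact Nat.sInf_mem
    (s := {n | ∃ s : Finset R, s.card = n ∧ Algebra.adjoin F (s : Set R) = ⊤})
    ⟨s.card, s, rfl, hs⟩

end minRank

namespace IsTotallySingular

variable {F R S : Type*} [Field F] [CommRing R] [Algebra F R] [CommRing S] [Algebra F S]

theorem of_surjective (hR : IsTotallySingular F R) (π : R →ₐ[F] S)
    (hπ : Function.Surjective π) : IsTotallySingular F S := by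
  intro y
  obtain ⟨x, rfl⟩ := hπ y
  obtain ⟨a, ha⟩ := hR x
  exact ⟨a, by rw [← map_pow, ha, AlgHom.commutes]⟩

theorem of_injective (hS : IsTotallySingular F S) (f : R →ₐ[F] S)
    (hf : Function.Injective f) : IsTotallySingular F R := by
  intro x
  obtain ⟨a, ha⟩ := hS (f x)
  exact ⟨a, hf <| by rw [map_pow, ha, AlgHom.commutes]⟩

theorem tower_top (L : Type*) [CommSemiring L] [Algebra F L] [Algebra L R] [IsScalarTower F L R]
    (hR : IsTotallySingular F R) : IsTotallySingular L R := by
  intro x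
  obtain ⟨a, ha⟩ := hR x
  exact ⟨algebraMap F L a, by rw [ha, IsScalarTower.algebraMap_apply F L R]⟩

theorem ker_le_nilradical [Nontrivial S] (hR : IsTotallySingular F R) (π : R →ₐ[F] S) :
    RingHom.ker π ≤ nilradical R := by
  intro x hx
  obtain ⟨a, ha⟩ := hR x
  have : algebraMap F S a = 0 := by
    rw [← AlgHom.commutes π, ← ha, map_pow, RingHom.mem_ker.mp hx, zero_pow two_ne_zero]
  rw [(algebraMap F S).injective.eq_iff' (map_zero _)] at this
  exact mem_nilradical.mpr ⟨2, by rw [ha, this, map_zero]⟩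

theorem isIntegral (hR : IsTotallySingular F R) (x : R) : IsIntegral F x := by
  obtain ⟨a, ha⟩ := hR x
  exact ⟨X ^ 2 - C a, monic_X_pow_sub_C a two_ne_zero, by simp [ha]⟩

end IsTotallySingular

theorem finrank_adjoin_singleton_le_two {F R : Type*} [Field F] [CommRing R] [Algebra F R]
    {x : R} {a : F} (hx : x ^ 2 = algebraMap F R a) :
    finrank F (Algebra.adjoin F {x}) ≤ 2 := by
  classical
  have hspan := Submodule.span_range_natDegree_eq_adjoin (monic_X_pow_sub_C a two_ne_zero)
    (x := x) (by simp [hx])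
  rw [natDegree_X_pow_sub_C] at hspan
  change finrank F (Subalgebra.toSubmodule (Algebra.adjoin F {x})) ≤ 2
  rw [← hspan]
  exact (finrank_span_finset_le_card _).trans (Finset.card_image_le.trans (by simp))

theorem IsTotallySingular.finrank_adjoin_le {F R : Type*} [Field F] [CommRing R] [Algebra F R]
    (hR : IsTotallySingular F R) (s : Finset R) :
    finrank F (Algebra.adjoin F (s : Set R)) ≤ 2 ^ s.card := by
  classical
  nontriviality R
  induction s using Finset.induction_on with
  | empty => rw [Finset.coe_empty, Algebra.adjoin_empty, Subalgebra.finrank_bot]; rfl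
  | insert x s hxs ih =>
    obtain ⟨a, ha⟩ := hR x
    rw [Finset.coe_insert, Set.insert_eq, Algebra.adjoin_union, Finset.card_insert_of_notMem hxs,
      pow_succ']
    exact (Subalgebra.finrank_sup_le_of_free _ _).trans
      (Nat.mul_le_mul (finrank_adjoin_singleton_le_two ha) ih)

theorem finrank_adjoin_simple_eq_two {E K : Type*} [Field E] [Field K] [Algebra E K] {x : K}
    {c : E} (hc : x ^ 2 = algebraMap E K c) (hx : x ∉ Set.range (algebraMap E K)) :
    finrank E E⟮x⟯ = 2 := by
  have hirr : Irreducible (X ^ 2 - C c) := by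
    refine X_pow_sub_C_irreducible_of_prime Nat.prime_two fun b hb => ?_
    have : x ^ 2 = algebraMap E K b ^ 2 := by rw [hc, ← hb, map_pow]
    rcases sq_eq_sq_iff_eq_or_eq_neg.mp this with h | h
    · exact hx ⟨b, h.symm⟩
    · exact hx ⟨-b, by rw [h, map_neg]⟩
  have hmin := minpoly.eq_of_irreducible_of_monic hirr (x := x) (by simp [hc])
    (monic_X_pow_sub_C c two_ne_zero)
  rw [adjoin.finrank (minpoly.ne_zero_iff.mp (hmin ▸ (monic_X_pow_sub_C c two_ne_zero).ne_zero)),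
    ← hmin, natDegree_X_pow_sub_C]

namespace IsTotallySingular

variable {F K : Type*} [Field F] [Field K] [Algebra F K]

theorem adjoin_toSubalgebra (hK : IsTotallySingular F K) (S : Set K) :
    (adjoin F S).toSubalgebra = Algebra.adjoin F S :=
  adjoin_toSubalgebra_of_isAlgebraic fun x _ => (hK.isIntegral x).isAlgebraic

theorem finrank_adjoin_insert (hK : IsTotallySingular F K) {S : Set K} {x : K}
    (hx : x ∉ Algebra.adjoin F S) :
    finrank F (Algebra.adjoin F (insert x S)) = 2 * finrank F (Algebra.adjoin F S) := by
  set E := adjoin F S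
  obtain ⟨a, ha⟩ := hK x
  have hdeg : finrank E E⟮x⟯ = 2 := by
    refine finrank_adjoin_simple_eq_two (c := algebraMap F E a) ha ?_
    rintro ⟨y, rfl⟩
    exact hx (hK.adjoin_toSubalgebra S ▸ y.2)
  have hrestrict : E⟮x⟯.restrictScalars F = adjoin F (insert x S) := by
    rw [adjoin_adjoin_left, Set.union_singleton]
  rw [← hK.adjoin_toSubalgebra, ← hK.adjoin_toSubalgebra, ← hrestrict]
  change finrank F E⟮x⟯ = 2 * finrank F E
  rw [← finrank_mul_finrank F E E⟮x⟯, hdeg, mul_comm]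

theorem exists_subset_adjoin_image_eq {R : Type*} [CommRing R] [Algebra F R]
    (hK : IsTotallySingular F K) (π : R →ₐ[F] K) (s : Finset R) :
    ∃ s₀ ⊆ s, Algebra.adjoin F (π '' s₀) = Algebra.adjoin F (π '' s) ∧
      finrank F (Algebra.adjoin F (π '' s₀)) = 2 ^ s₀.card := by
  classical
  induction s using Finset.induction_on with
  | empty => exact ⟨∅, subset_rfl, rfl, by simp⟩
  | insert x s hxs ih =>
    obtain ⟨s₀, hsub, hadj, hrank⟩ := ih
    rw [Finset.coe_insert, Set.image_insert_eq, ← Algebra.adjoin_insert_adjoin, ← hadj]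
    by_cases hx : π x ∈ Algebra.adjoin F (π '' s₀)
    · refine ⟨s₀, hsub.trans (Finset.subset_insert _ _), ?_, hrank⟩
      rw [Set.insert_eq_of_mem hx, Algebra.adjoin_eq]
    · refine ⟨insert x s₀, Finset.insert_subset_insert _ hsub, ?_, ?_⟩
      · rw [Finset.coe_insert, Set.image_insert_eq, Algebra.adjoin_insert_adjoin]
      · rw [Finset.coe_insert, Set.image_insert_eq, hK.finrank_adjoin_insert hx, hrank,
          Finset.card_insert_of_notMem fun h => hxs (hsub h), pow_succ']

theorem two_pow_minRank [FiniteDimensional F K] (hK : IsTotallySingular F K) :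
    2 ^ minRank F K = finrank F K := by
  obtain ⟨s, hcard, hs⟩ := exists_card_eq_minRank (F := F) (R := K)
  obtain ⟨s₀, hsub, hadj, hrank⟩ := hK.exists_subset_adjoin_image_eq (AlgHom.id F K) s
  have htop : Algebra.adjoin F (AlgHom.id F K '' s₀) = ⊤ := by
    rw [hadj, AlgHom.coe_id, Set.image_id, hs]
  rw [htop] at hrank
  have hmin : minRank F K ≤ s₀.card := minRank_le_card (by simpa using htop)
  have hle : s₀.card ≤ minRank F K := hcard ▸ Finset.card_le_card hsub
  rw [← le_antisymm hle hmin, ← hrank, Subalgebra.topEquiv.toLinearEquiv.finrank_eq]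

theorem minRank_add_minRank (L : Type*) [Field L] [Algebra F L] [Algebra L K]
    [IsScalarTower F L K] [FiniteDimensional F K] (hK : IsTotallySingular F K) :
    minRank F L + minRank L K = minRank F K := by
  have hL : IsTotallySingular F L :=
    hK.of_injective (IsScalarTower.toAlgHom F L K) (algebraMap L K).injective
  have : FiniteDimensional F L := FiniteDimensional.left F L K
  have : FiniteDimensional L K := FiniteDimensional.right F L K
  refine Nat.pow_right_injective le_rfl ?_
  simp only [pow_add, hL.two_pow_minRank, (hK.tower_top L).two_pow_minRank, hK.two_pow_minRank,
    finrank_mul_finrank]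

end IsTotallySingular

namespace Subalgebra

variable {R A : Type*} [CommRing R] [CommRing A] [Algebra R A] (B : Subalgebra R A)

theorem exists_sub_mem_of_adjoin_eq_top (I : Ideal A) {s : Set A}
    (hs : Algebra.adjoin R s = ⊤) (h : ∀ x ∈ s, ∃ b ∈ B, x - b ∈ I) (x : A) :
    ∃ b ∈ B, x - b ∈ I := by
  let q := Ideal.Quotient.mkₐ R I
  have hmem : ∀ y, y ∈ (B.map q).comap q ↔ ∃ b ∈ B, y - b ∈ I := fun y => by
    simp only [mem_comap, mem_map, q, Ideal.Quotient.mkₐ_eq_mk,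
      Ideal.Quotient.mk_eq_mk_iff_sub_mem, sub_mem_comm_iff]
  have hle : Algebra.adjoin R s ≤ (B.map q).comap q :=
    Algebra.adjoin_le fun y hy => (hmem y).mpr (h y hy)
  exact (hmem x).mp (hle (hs ▸ Algebra.mem_top))

theorem eq_top_of_forall_sub_mem_span {Z : Set A} (hZ : Z ⊆ B)
    (hnil : IsNilpotent (Ideal.span Z)) (hB : ∀ x, ∃ b ∈ B, x - b ∈ Ideal.span Z) :
    B = ⊤ := by
  set I := Ideal.span Z
  have hstep : ∀ k x, ∃ b ∈ B, x - b ∈ I ^ (k + 1) := by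
    intro k
    induction k with
    | zero => simpa using hB
    | succ k ih =>
      suffices hI : ∀ y ∈ I, ∃ b ∈ B, y - b ∈ I ^ (k + 2) by
        intro x
        obtain ⟨b, hb, hxb⟩ := hB x
        obtain ⟨b', hb', hyb⟩ := hI _ hxb
        exact ⟨b + b', B.add_mem hb hb', by rwa [sub_sub] at hyb⟩
      intro y hy
      induction hy using Submodule.span_induction with
      | mem z hz => exact ⟨z, hZ hz, by simp⟩
      | zero => exact ⟨0, B.zero_mem, by simp⟩
      | add y y' _ _ h h' =>
        obtain ⟨b, hb, hyb⟩ := h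
        obtain ⟨b', hb', hyb'⟩ := h'
        refine ⟨b + b', B.add_mem hb hb', ?_⟩
        convert Ideal.add_mem _ hyb hyb' using 1
        ring
      | smul c y hy h =>
        obtain ⟨b, hb, hyb⟩ := h
        obtain ⟨d, hd, hcd⟩ := ih c
        refine ⟨d * b, B.mul_mem hd hb, ?_⟩
        have : c • y - d * b = d * (y - b) + (c - d) * y := by rw [smul_eq_mul]; ring
        rw [this, pow_succ _ (k + 1)]
        exact Ideal.add_mem _ (Ideal.mul_mem_left _ _ hyb) (Ideal.mul_mem_mul hcd hy)
  obtain ⟨n, hn⟩ := hnil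
  refine eq_top_iff.mpr fun x _ => ?_
  obtain ⟨b, hb, hxb⟩ := hstep n x
  rw [pow_succ, hn, zero_mul, Ideal.zero_eq_bot, Ideal.mem_bot, sub_eq_zero] at hxb
  exact hxb ▸ hb

end Subalgebra

namespace IsTotallySingular

variable {F R K : Type*} [Field F] [CommRing R] [Algebra F R] [FiniteDimensional F R]
  [Field K] [Algebra F K]

theorem minRank_le_minRank_add_spanFinrank (hR : IsTotallySingular F R) (π : R →ₐ[F] K)
    (hπ : Function.Surjective π) :
    minRank F R ≤ minRank F K + (RingHom.ker π).spanFinrank := by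
  classical
  have : IsNoetherianRing R := isNoetherian_of_tower F inferInstance
  have : FiniteDimensional F K := Module.Finite.of_surjective π.toLinearMap hπ
  obtain ⟨t, ht, htop⟩ := exists_card_eq_minRank (F := F) (R := K)
  obtain ⟨z, hz, hspan⟩ :
      ∃ z : Finset R, z.card = (RingHom.ker π).spanFinrank ∧ Ideal.span z = RingHom.ker π :=
    (IsNoetherian.noetherian (RingHom.ker π)).exists_span_finset_card_eq_spanFinrank
  set u := t.image (Function.surjInv hπ)
  set B := Algebra.adjoin F ((u ∪ z : Finset R) : Set R)
  have hB : B = ⊤ := by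
    refine B.eq_top_of_forall_sub_mem_span (Z := z) ?_ ?_ fun x => ?_
    · exact fun w hw => Algebra.subset_adjoin (by simp [hw])
    · exact (Ideal.FG.isNilpotent_iff_le_nilradical ⟨z, rfl⟩).mpr
        (hspan ▸ hR.ker_le_nilradical π)
    · have hle : Algebra.adjoin F (t : Set K) ≤ B.map π := by
        rw [← Algebra.adjoin_image]
        refine Algebra.adjoin_mono fun y hy =>
          ⟨Function.surjInv hπ y, ?_, Function.surjInv_eq hπ y⟩
        simp only [u, Finset.coe_union, Finset.coe_image]
        exact Or.inl ⟨y, hy, rfl⟩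
      obtain ⟨b, hb, hbx⟩ := Subalgebra.mem_map.mp (hle (htop ▸ Algebra.mem_top : π x ∈ _))
      refine ⟨b, hb, ?_⟩
      rw [hspan, RingHom.mem_ker, map_sub, hbx, sub_self]
  calc minRank F R ≤ (u ∪ z).card := minRank_le_card hB
    _ ≤ u.card + z.card := Finset.card_union_le _ _
    _ ≤ minRank F K + (RingHom.ker π).spanFinrank := by
      rw [hz, ← ht]
      gcongr
      exact Finset.card_image_le

theorem exists_subset_bijective_adjoin (hR : IsTotallySingular F R) (π : R →ₐ[F] K)
    (hπ : Function.Surjective π) {s : Finset R} (hs : Algebra.adjoin F (s : Set R) = ⊤) :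
    ∃ s₀ ⊆ s, s₀.card = minRank F K ∧
      Function.Bijective (π.comp (Algebra.adjoin F (s₀ : Set R)).val) := by
  have : FiniteDimensional F K := Module.Finite.of_surjective π.toLinearMap hπ
  have hK := hR.of_surjective π hπ
  obtain ⟨s₀, hsub, hadj, hrank⟩ := hK.exists_subset_adjoin_image_eq π s
  set A := Algebra.adjoin F (s₀ : Set R)
  have himage : Algebra.adjoin F (π '' s₀) = ⊤ := by
    rw [hadj, Algebra.adjoin_image, hs, Algebra.map_top, AlgHom.range_eq_top]
    exact hπ
  have hcard : s₀.card = minRank F K := by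
    rw [himage, Subalgebra.topEquiv.toLinearEquiv.finrank_eq, ← hK.two_pow_minRank] at hrank
    exact Nat.pow_right_injective le_rfl hrank.symm
  have hsurj : Function.Surjective (π.comp A.val) := fun y => by
    have hy : y ∈ A.map π := Algebra.adjoin_image F π s₀ ▸ himage ▸ Algebra.mem_top
    obtain ⟨a, ha, rfl⟩ := Subalgebra.mem_map.mp hy
    exact ⟨⟨a, ha⟩, rfl⟩
  have hdim : finrank F A = finrank F K := le_antisymm
    ((hR.finrank_adjoin_le s₀).trans (hcard ▸ hK.two_pow_minRank).le)
    (LinearMap.finrank_le_finrank_of_surjective (f := (π.comp A.val).toLinearMap) hsurj)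
  exact ⟨s₀, hsub, hcard, (LinearMap.injective_iff_surjective_of_finrank_eq_finrank
    (f := (π.comp A.val).toLinearMap) hdim).mpr hsurj, hsurj⟩

theorem minRank_add_spanFinrank_le_minRank (hR : IsTotallySingular F R) (π : R →ₐ[F] K)
    (hπ : Function.Surjective π) :
    minRank F K + (RingHom.ker π).spanFinrank ≤ minRank F R := by
  classical
  obtain ⟨s, hs, htop⟩ := exists_card_eq_minRank (F := F) (R := R)
  obtain ⟨s₀, hsub, hcard, hinj, hsurj⟩ := hR.exists_subset_bijective_adjoin π hπ htop
  set A := Algebra.adjoin F (s₀ : Set R)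
  have hlift (x : R) : ∃ a ∈ A, π a = π x :=
    let ⟨a, ha⟩ := hsurj (π x)
    ⟨a, a.2, ha⟩
  choose b hbA hb using hlift
  set z := (s \ s₀).image fun v => v - b v
  have hzker : Ideal.span (z : Set R) ≤ RingHom.ker π := by
    refine Ideal.span_le.mpr fun w hw => ?_
    obtain ⟨v, -, rfl⟩ := Finset.mem_image.mp hw
    simp [hb]
  have hgen : ∀ v ∈ (s : Set R), ∃ a ∈ A, v - a ∈ Ideal.span (z : Set R) := fun v hv => by
    by_cases hv₀ : v ∈ s₀
    · exact ⟨v, Algebra.subset_adjoin hv₀, by simp⟩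
    · exact ⟨b v, hbA v, Ideal.subset_span
        (Finset.mem_image_of_mem _ (Finset.mem_sdiff.mpr ⟨hv, hv₀⟩))⟩
  have hker : RingHom.ker π = Ideal.span z := by
    refine le_antisymm (fun x hx => ?_) hzker
    obtain ⟨a, ha, hxa⟩ := A.exists_sub_mem_of_adjoin_eq_top _ htop hgen x
    have hπa : π a = 0 := by
      simpa [RingHom.mem_ker.mp hx] using RingHom.mem_ker.mp (hzker hxa)
    have ha0 : a = 0 :=
      congrArg Subtype.val (hinj (a₁ := ⟨a, ha⟩) (a₂ := 0) (by simp [hπa]))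
    rwa [ha0, sub_zero] at hxa
  calc minRank F K + (RingHom.ker π).spanFinrank ≤ s₀.card + z.card := by
        rw [hker, hcard, ← Set.ncard_coe_finset]
        gcongr
        exact Submodule.spanFinrank_span_le_ncard_of_finite z.finite_toSet
    _ ≤ s₀.card + (s \ s₀).card := Nat.add_le_add_left Finset.card_image_le _
    _ = minRank F R := by rw [add_comm, Finset.card_sdiff_add_card_eq_card hsub, hs]

theorem minRank_eq (hR : IsTotallySingular F R) (π : R →ₐ[F] K)
    (hπ : Function.Surjective π) :
    minRank F R = minRank F K + (RingHom.ker π).spanFinrank :=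
  (hR.minRank_le_minRank_add_spanFinrank π hπ).antisymm
    (hR.minRank_add_spanFinrank_le_minRank π hπ)

end IsTotallySingular

theorem stmt_3_general (F R : Type*) [Field F] [CommRing R] [Algebra F R]
    [FiniteDimensional F R]
    (hconic : ∀ x : R, ∃ a : F, x ^ 2 = algebraMap F R a)
    -- `L` is a subfield of `R` containing `F`
    (L : Subalgebra F R) (hLfield : IsField L) :
    minRank L R + minRank F L = minRank F R := by
  let _ : Field L := hLfield.toField
  have hR : IsTotallySingular F R := hconic
  have : Nontrivial R := ⟨1, 0, fun h => one_ne_zero (Subtype.ext h : (1 : L) = 0)⟩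
  have : FiniteDimensional L R := Module.Finite.of_restrictScalars_finite F L R
  obtain ⟨m, hm⟩ := Ideal.exists_maximal R
  let _ : Field (R ⧸ m) := Ideal.Quotient.field m
  have hK := hR.of_surjective _ (Ideal.Quotient.mkₐ_surjective F m)
  have hF := hR.minRank_eq _ (Ideal.Quotient.mkₐ_surjective F m)
  have hL := (hR.tower_top L).minRank_eq _ (Ideal.Quotient.mkₐ_surjective L m)
  have hkF : RingHom.ker (Ideal.Quotient.mkₐ F m) = m := Ideal.Quotient.mkₐ_ker F m
  have hkL : RingHom.ker (Ideal.Quotient.mkₐ L m) = m := Ideal.Quotient.mkₐ_ker L m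
  rw [hF, hL, hkF, hkL, ← hK.minRank_add_minRank L]
  ring

theorem stmt_3 (F R : Type*) [Field F] [CharP F 2] [CommRing R] [Algebra F R]
    [FiniteDimensional F R]
    (hconic : ∀ x : R, ∃ a : F, x ^ 2 = algebraMap F R a)
    -- `L` is a subfield of `R` containing `F`
    (L : Subalgebra F R) (hLfield : IsField L) :
    minRank L R + minRank F L = minRank F R :=
  stmt_3_general F R hconic L hLfield
end

section
/- Let F be a field of characteristic 2 and let R and R' be finite-dimensional totally singular conic F-algebras with dim_F R = 2^{r_F(R)} and dim_F R' = 2^{r_F(R')}. Let K and K' be maximal subfields of R and R' containing F, respectively. Then R and R' are isomorphic as F-algebras if and only if dim_F R = dim_F R' and K ≅ K' as F-algebras. -/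
open Module

def IsTotallySingularConic (F A : Type*) [CommSemiring F] [Semiring A] [Algebra F A] : Prop :=
  ∀ x : A, ∃ a : F, x ^ 2 = algebraMap F A a

def squareValues (F A : Type*) [CommSemiring F] [Semiring A] [Algebra F A] : Set F :=
  {a | ∃ x : A, x ^ 2 = algebraMap F A a}

section Squares

variable {F A B : Type*} [CommSemiring F] [Semiring A] [Semiring B] [Algebra F A] [Algebra F B]

theorem IsTotallySingularConic.subalgebra (hA : IsTotallySingularConic F A)
    (S : Subalgebra F A) : IsTotallySingularConic F S := fun x ↦
  (hA x).imp fun _ ha ↦ Subtype.ext (by simpa using ha)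

theorem mem_squareValues_subalgebra {S : Subalgebra F A} {a : F} :
    a ∈ squareValues F S ↔ ∃ x ∈ S, x ^ 2 = algebraMap F A a := by
  constructor
  · rintro ⟨x, hx⟩
    exact ⟨x, x.2, by simpa using congrArg Subtype.val hx⟩
  · rintro ⟨x, hxS, hx⟩
    exact ⟨⟨x, hxS⟩, Subtype.ext (by simpa using hx)⟩

theorem squareValues_subset_of_algHom (f : A →ₐ[F] B) : squareValues F A ⊆ squareValues F B :=
  fun _ ⟨x, hx⟩ ↦ ⟨f x, by rw [← map_pow, hx, f.commutes]⟩

theorem squareValues_congr (e : A ≃ₐ[F] B) : squareValues F A = squareValues F B :=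
  (squareValues_subset_of_algHom e.toAlgHom).antisymm
    (squareValues_subset_of_algHom e.symm.toAlgHom)

end Squares

section ReducedConic

variable {F A B : Type*} [Field F] [CommRing A] [CommRing B] [Algebra F A] [Algebra F B]

theorem IsTotallySingularConic.isField [Nontrivial A] [IsReduced A]
    (hA : IsTotallySingularConic F A) : IsField A := by
  refine ⟨exists_pair_ne A, mul_comm, fun {v} hv ↦ ?_⟩
  obtain ⟨a, ha⟩ := hA v
  have ha0 : a ≠ 0 := by
    rintro rfl
    exact hv (IsReduced.eq_zero v ⟨2, by rw [ha, map_zero]⟩)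
  refine ⟨a⁻¹ • v, ?_⟩
  rw [mul_smul_comm, ← sq, ha, Algebra.smul_def, ← map_mul, inv_mul_cancel₀ ha0, map_one]

variable [CharP F 2] [Nontrivial B] [IsReduced B]

theorem IsTotallySingularConic.algHom_ext (hA : IsTotallySingularConic F A)
    (f g : A →ₐ[F] B) : f = g := by
  have := charP_of_injective_algebraMap' F (A := B) 2
  ext x
  obtain ⟨a, ha⟩ := hA x
  apply frobenius_inj B 2
  rw [frobenius_def, frobenius_def, ← map_pow, ← map_pow, ha, f.commutes, g.commutes]

-- The homomorphism sends `x` to the unique `y` with `y ^ 2 = x ^ 2`; each axiom it has to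
-- satisfy follows from the injectivity of squaring in `B`.
theorem IsTotallySingularConic.nonempty_algHom [Nontrivial A] (hA : IsTotallySingularConic F A)
    (h : squareValues F A ⊆ squareValues F B) : Nonempty (A →ₐ[F] B) := by
  have := charP_of_injective_algebraMap' F (A := A) 2
  have := charP_of_injective_algebraMap' F (A := B) 2
  choose q hq using hA
  choose f hf using fun x ↦ h ⟨x, hq x⟩
  have key : ∀ x a, x ^ 2 = algebraMap F A a → ∀ y : B, y ^ 2 = algebraMap F B a → f x = y := by
    intro x a hx y hy
    apply frobenius_inj B 2
    rw [frobenius_def, frobenius_def, hf, hy, (algebraMap F A).injective ((hq x).symm.trans hx)]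
  exact ⟨{ toFun := f
           map_one' := key 1 1 (by simp) 1 (by simp)
           map_mul' := fun x y ↦ key _ (q x * q y) (by rw [mul_pow, hq, hq, map_mul]) _
             (by rw [mul_pow, hf, hf, map_mul])
           map_zero' := key 0 0 (by simp) 0 (by simp)
           map_add' := fun x y ↦ key _ (q x + q y) (by rw [CharTwo.add_sq, hq, hq, map_add]) _
             (by rw [CharTwo.add_sq, hf, hf, map_add])
           commutes' := fun r ↦ key _ (r ^ 2) (by rw [map_pow]) _ (by rw [map_pow]) }⟩

theorem IsTotallySingularConic.nonempty_algEquiv [Nontrivial A] [IsReduced A]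
    (hA : IsTotallySingularConic F A) (hB : IsTotallySingularConic F B)
    (h : squareValues F A = squareValues F B) : Nonempty (A ≃ₐ[F] B) := by
  obtain ⟨f⟩ := hA.nonempty_algHom h.subset
  obtain ⟨g⟩ := hB.nonempty_algHom h.superset
  exact ⟨AlgEquiv.ofAlgHom f g (hB.algHom_ext _ _) (hA.algHom_ext _ _)⟩

end ReducedConic

section Subfields

variable {F A : Type*} [Field F] [CommRing A] [Algebra F A]

theorem Subalgebra.eq_zero_of_sq_eq_zero {K : Subalgebra F A} (hK : IsField K) {u : A}
    (hu : u ∈ K) (h : u ^ 2 = 0) : u = 0 := by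
  have := hK.isDomain
  have hsq : (⟨u, hu⟩ : K) ^ 2 = 0 := Subtype.ext h
  exact congrArg Subtype.val (pow_eq_zero_iff two_ne_zero |>.mp hsq)

theorem Subalgebra.exists_mul_eq_one {K : Subalgebra F A} (hK : IsField K) {v : A}
    (hv : v ∈ K) (h : v ≠ 0) : ∃ w ∈ K, v * w = 1 := by
  obtain ⟨w, hw⟩ := hK.mul_inv_cancel (a := ⟨v, hv⟩) fun h' ↦ h (congrArg Subtype.val h')
  exact ⟨w, w.2, congrArg Subtype.val hw⟩

theorem mem_adjoin_insert_of_sq {K : Subalgebra F A} {x : A} {a : F}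
    (hx : x ^ 2 = algebraMap F A a) {z : A} (hz : z ∈ Algebra.adjoin F (insert x (K : Set A))) :
    ∃ u ∈ K, ∃ v ∈ K, z = u + v * x := by
  induction hz using Algebra.adjoin_induction with
  | mem y hy =>
    rcases hy with rfl | hy
    · exact ⟨0, K.zero_mem, 1, K.one_mem, by ring⟩
    · exact ⟨y, hy, 0, K.zero_mem, by ring⟩
  | algebraMap r => exact ⟨_, K.algebraMap_mem r, 0, K.zero_mem, by ring⟩
  | add y z _ _ hy hz =>
    obtain ⟨u, hu, v, hv, rfl⟩ := hy
    obtain ⟨u', hu', v', hv', rfl⟩ := hz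
    exact ⟨u + u', K.add_mem hu hu', v + v', K.add_mem hv hv', by ring⟩
  | mul y z _ _ hy hz =>
    obtain ⟨u, hu, v, hv, rfl⟩ := hy
    obtain ⟨u', hu', v', hv', rfl⟩ := hz
    refine ⟨u * u' + v * v' * algebraMap F A a, ?_, u * v' + v * u', ?_, ?_⟩
    · exact K.add_mem (K.mul_mem hu hu') (K.mul_mem (K.mul_mem hv hv') (K.algebraMap_mem a))
    · exact K.add_mem (K.mul_mem hu hv') (K.mul_mem hv hu')
    · linear_combination v * v' * hx

variable [CharP F 2] [Nontrivial A]

-- `(u + v * x) ^ 2 = u ^ 2 + v ^ 2 * x ^ 2`, so if it vanishes with `v ≠ 0` then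
-- `x ^ 2 = (u * v⁻¹) ^ 2` is a square in `K`.
theorem add_mul_eq_zero_of_sq_eq_zero {K : Subalgebra F A} (hK : IsField K) {x : A}
    (hx : ∀ s ∈ K, s ^ 2 ≠ x ^ 2) {u v : A} (hu : u ∈ K) (hv : v ∈ K)
    (h : (u + v * x) ^ 2 = 0) : u + v * x = 0 := by
  have := charP_of_injective_algebraMap' F (A := A) 2
  rw [CharTwo.add_sq, CharTwo.add_eq_zero] at h
  by_cases hv0 : v = 0
  · rw [hv0, zero_mul, add_zero]
    exact Subalgebra.eq_zero_of_sq_eq_zero hK hu (by rw [h, hv0]; ring)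
  obtain ⟨w, hw, hvw⟩ := Subalgebra.exists_mul_eq_one hK hv hv0
  refine absurd ?_ (hx (u * w) (K.mul_mem hu hw))
  linear_combination w ^ 2 * h + (x ^ 2 * (v * w + 1)) * hvw

theorem IsTotallySingularConic.isField_adjoin_insert (hA : IsTotallySingularConic F A)
    {K : Subalgebra F A} (hK : IsField K) {x : A} (hx : ∀ s ∈ K, s ^ 2 ≠ x ^ 2) :
    IsField (Algebra.adjoin F (insert x (K : Set A))) := by
  have : IsReduced (Algebra.adjoin F (insert x (K : Set A))) := by
    refine (isReduced_iff_pow_one_lt 2 one_lt_two).mpr fun ⟨z, hz⟩ h ↦ Subtype.ext ?_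
    obtain ⟨a, ha⟩ := hA x
    obtain ⟨u, hu, v, hv, rfl⟩ := mem_adjoin_insert_of_sq ha hz
    exact add_mul_eq_zero_of_sq_eq_zero hK hx hu hv (congrArg Subtype.val h)
  exact (hA.subalgebra _).isField

theorem IsTotallySingularConic.squareValues_eq_of_isMaximal (hA : IsTotallySingularConic F A)
    {K : Subalgebra F A} (hK : IsField K)
    (hmax : ∀ K₁ : Subalgebra F A, IsField K₁ → K ≤ K₁ → K = K₁) :
    squareValues F K = squareValues F A := by
  refine (squareValues_subset_of_algHom K.val).antisymm fun a ⟨x, hx⟩ ↦ ?_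
  rw [mem_squareValues_subalgebra, ← hx]
  by_contra! hne
  have hxK : x ∈ K := (hmax _ (hA.isField_adjoin_insert hK hne)
    fun _ hy ↦ Algebra.subset_adjoin (Set.mem_insert_of_mem _ hy)) ▸
      Algebra.subset_adjoin (Set.mem_insert x _)
  exact hne x hxK rfl

end Subfields

theorem Finset.prod_mul_prod_eq_sq_prod_inter_mul_prod_symmDiff {ι M : Type*} [CommMonoid M]
    [DecidableEq ι] (f : ι → M) (S T : Finset ι) :
    (∏ i ∈ S, f i) * ∏ i ∈ T, f i = (∏ i ∈ S ∩ T, f i) ^ 2 * ∏ i ∈ symmDiff S T, f i := by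
  have hdisj : Disjoint (symmDiff S T) (S ∩ T) := disjoint_symmDiff_inf S T
  rw [← prod_union_inter, ← sup_eq_union, ← symmDiff_sup_inf, sup_eq_union, inf_eq_inter,
    prod_union hdisj, sq]
  ac_rfl

theorem Module.Basis.nonempty_algEquiv_of_mul_eq {F A A' κ : Type*} [CommRing F] [Ring A]
    [Ring A'] [Algebra F A] [Algebra F A'] (b : Basis κ F A) (b' : Basis κ F A')
    (σ : κ → κ → F) (τ : κ → κ → κ) {k₀ : κ} (h1 : b k₀ = 1) (h1' : b' k₀ = 1)
    (hm : ∀ k l, b k * b l = σ k l • b (τ k l)) (hm' : ∀ k l, b' k * b' l = σ k l • b' (τ k l)) :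
    Nonempty (A ≃ₐ[F] A') := by
  let f : A ≃ₗ[F] A' := b.equiv b' (Equiv.refl κ)
  have hfb : ∀ k, f (b k) = b' k := fun k ↦ b.equiv_apply k b' (Equiv.refl κ)
  have hmul : (LinearMap.mul F A).compr₂ f.toLinearMap
      = (LinearMap.mul F A').compl₁₂ f.toLinearMap f.toLinearMap :=
    b.ext fun k ↦ b.ext fun l ↦ by simp [hm, hm', hfb]
  refine ⟨AlgEquiv.ofLinearEquiv f (by rw [← h1, hfb, h1']) fun x y ↦ ?_⟩
  simpa using LinearMap.congr_fun (LinearMap.congr_fun hmul x) y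

section Monomials

variable {F A A' ι : Type*} [Field F] [CommRing A] [CommRing A'] [Algebra F A] [Algebra F A']

theorem prod_mul_prod_eq_smul [DecidableEq ι] {z : ι → A} {d : ι → F}
    (hz : ∀ i, z i ^ 2 = algebraMap F A (d i)) (U V : Finset ι) :
    (∏ i ∈ U, z i) * ∏ i ∈ V, z i = (∏ i ∈ U ∩ V, d i) • ∏ i ∈ symmDiff U V, z i := by
  rw [Finset.prod_mul_prod_eq_sq_prod_inter_mul_prod_symmDiff, ← Finset.prod_pow,
    Finset.prod_congr rfl fun i _ ↦ hz i, ← map_prod, Algebra.smul_def]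

theorem adjoin_range_eq_span_prod {z : ι → A} (hz : ∀ i, ∃ a : F, z i ^ 2 = algebraMap F A a) :
    Subalgebra.toSubmodule (Algebra.adjoin F (Set.range z))
      = Submodule.span F (Set.range fun U : Finset ι ↦ ∏ i ∈ U, z i) := by
  classical
  choose d hd using hz
  set M := Submodule.span F (Set.range fun U : Finset ι ↦ ∏ i ∈ U, z i)
  have hmem : ∀ U : Finset ι, ∏ i ∈ U, z i ∈ M := fun U ↦ Submodule.subset_span ⟨U, rfl⟩
  have hmul : ∀ x y, x ∈ M → y ∈ M → x * y ∈ M := by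
    intro x y hx hy
    have hxy := Submodule.mul_mem_mul hx hy
    rw [Submodule.span_mul_span] at hxy
    refine Submodule.span_le.mpr ?_ hxy
    rintro _ ⟨_, ⟨U, rfl⟩, _, ⟨V, rfl⟩, rfl⟩
    show _ * _ ∈ M
    rw [prod_mul_prod_eq_smul hd]
    exact M.smul_mem _ (hmem _)
  refine le_antisymm ?_ (Submodule.span_le.mpr ?_)
  · have hle : Algebra.adjoin F (Set.range z) ≤ M.toSubalgebra (by simpa using hmem ∅) hmul :=
      Algebra.adjoin_le fun _ ⟨i, hi⟩ ↦
        hi ▸ Submodule.mem_toSubalgebra.mpr (by simpa using hmem {i})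
    exact hle
  · rintro _ ⟨U, rfl⟩
    exact Subalgebra.prod_mem _ fun i _ ↦ Algebra.subset_adjoin ⟨i, rfl⟩

variable [Fintype ι]

theorem exists_basis_eq_prod {z : ι → A}
    (hz : ∀ i, ∃ a : F, z i ^ 2 = algebraMap F A a) (hgen : Algebra.adjoin F (Set.range z) = ⊤)
    (hdim : finrank F A = 2 ^ Fintype.card ι) :
    ∃ b : Basis (Finset ι) F A, ∀ U, b U = ∏ i ∈ U, z i := by
  have hspan : ⊤ ≤ Submodule.span F (Set.range fun U : Finset ι ↦ ∏ i ∈ U, z i) := by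
    rw [← adjoin_range_eq_span_prod hz, hgen, Algebra.top_toSubmodule]
  refine ⟨basisOfTopLeSpanOfCardEqFinrank _ hspan (by rw [Fintype.card_finset, hdim]), fun U ↦ ?_⟩
  rw [coe_basisOfTopLeSpanOfCardEqFinrank]

theorem finrank_le_two_pow_of_adjoin_eq_top {z : ι → A}
    (hz : ∀ i, ∃ a : F, z i ^ 2 = algebraMap F A a) (hgen : Algebra.adjoin F (Set.range z) = ⊤) :
    finrank F A ≤ 2 ^ Fintype.card ι := by
  have := finrank_range_le_card (R := F) fun U : Finset ι ↦ ∏ i ∈ U, z i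
  rwa [Set.finrank, ← adjoin_range_eq_span_prod hz, hgen, Algebra.top_toSubmodule, finrank_top,
    Fintype.card_finset] at this

theorem finrank_adjoin_range_of_linearIndependent {z : ι → A}
    (hz : ∀ i, ∃ a : F, z i ^ 2 = algebraMap F A a)
    (hli : LinearIndependent F fun U : Finset ι ↦ ∏ i ∈ U, z i) :
    finrank F (Algebra.adjoin F (Set.range z)) = 2 ^ Fintype.card ι := by
  rw [← Subalgebra.finrank_toSubmodule, adjoin_range_eq_span_prod hz, finrank_span_eq_card hli,
    Fintype.card_finset]

-- The monomials in the generators form bases of `A` and `A'` with the same structure constants.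
theorem nonempty_algEquiv_of_generators {z : ι → A} {z' : ι → A'} {d : ι → F}
    (hz : ∀ i, z i ^ 2 = algebraMap F A (d i)) (hz' : ∀ i, z' i ^ 2 = algebraMap F A' (d i))
    (hgen : Algebra.adjoin F (Set.range z) = ⊤) (hgen' : Algebra.adjoin F (Set.range z') = ⊤)
    (hdim : finrank F A = 2 ^ Fintype.card ι) (hdim' : finrank F A' = 2 ^ Fintype.card ι) :
    Nonempty (A ≃ₐ[F] A') := by
  classical
  obtain ⟨b, hb⟩ := exists_basis_eq_prod (fun i ↦ ⟨_, hz i⟩) hgen hdim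
  obtain ⟨b', hb'⟩ := exists_basis_eq_prod (fun i ↦ ⟨_, hz' i⟩) hgen' hdim'
  refine b.nonempty_algEquiv_of_mul_eq b' (fun U V ↦ ∏ i ∈ U ∩ V, d i) symmDiff
    (k₀ := ∅) (by simp [hb]) (by simp [hb']) (fun U V ↦ ?_) (fun U V ↦ ?_)
  · simp only [hb, prod_mul_prod_eq_smul hz]
  · simp only [hb', prod_mul_prod_eq_smul hz']

end Monomials

theorem Algebra.adjoin_insert_add_of_mem {R A : Type*} [CommRing R] [Ring A] [Algebra R A]
    {s : Set A} {w : A} (hw : w ∈ adjoin R s) (x : A) :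
    adjoin R (insert (x + w) s) = adjoin R (insert x s) := by
  have key : ∀ x w, w ∈ adjoin R s → adjoin R (insert (x + w) s) ≤ adjoin R (insert x s) :=
    fun x w hw ↦ adjoin_le <| Set.insert_subset
      (add_mem (subset_adjoin (Set.mem_insert _ _)) (adjoin_mono (Set.subset_insert _ _) hw))
      ((Set.subset_insert _ _).trans subset_adjoin)
  refine (key x w hw).antisymm ?_
  simpa using key (x + w) (-w) (neg_mem hw)

theorem Algebra.adjoin_insert_congr {R A : Type*} [CommSemiring R] [Semiring A] [Algebra R A]
    {s t : Set A} (h : adjoin R s = adjoin R t) (x : A) :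
    adjoin R (insert x s) = adjoin R (insert x t) := by
  rw [← adjoin_insert_adjoin, h, adjoin_insert_adjoin]

section SplitGenerators

variable {F A : Type*} [Field F] [CharP F 2] [CommRing A] [Algebra F A] [Nontrivial A]

theorem exists_sq_eq_of_mem_adjoin_union {s t : Set A} (ht : ∀ y ∈ t, y ^ 2 = 0) {z : A}
    (hz : z ∈ Algebra.adjoin F (s ∪ t)) : ∃ w ∈ Algebra.adjoin F s, w ^ 2 = z ^ 2 := by
  have := charP_of_injective_algebraMap' F (A := A) 2
  induction hz using Algebra.adjoin_induction with
  | mem y hy =>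
    rcases hy with hy | hy
    · exact ⟨y, Algebra.subset_adjoin hy, rfl⟩
    · exact ⟨0, zero_mem _, by rw [ht y hy, zero_pow two_ne_zero]⟩
  | algebraMap r => exact ⟨_, Subalgebra.algebraMap_mem _ r, rfl⟩
  | add y z _ _ hy hz =>
    obtain ⟨w, hw, hwy⟩ := hy
    obtain ⟨w', hw', hwz⟩ := hz
    exact ⟨w + w', add_mem hw hw', by rw [CharTwo.add_sq, CharTwo.add_sq, hwy, hwz]⟩
  | mul y z _ _ hy hz =>
    obtain ⟨w, hw, hwy⟩ := hy
    obtain ⟨w', hw', hwz⟩ := hz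
    exact ⟨w * w', mul_mem hw hw', by rw [mul_pow, mul_pow, hwy, hwz]⟩

-- Add the generators one at a time: a generator `x` whose square is not a square in the field
-- `F[c]` built so far enlarges that field; otherwise `x ^ 2 = w ^ 2` with `w ∈ F[c]`, and the
-- generator is replaced by the square-zero element `x + w`.
theorem IsTotallySingularConic.exists_split_generators (hA : IsTotallySingularConic F A)
    (s : Finset A) :
    ∃ c n : Finset A, c.card + n.card ≤ s.card ∧ (∀ y ∈ n, y ^ 2 = 0) ∧
      IsField (Algebra.adjoin F (c : Set A)) ∧
      Algebra.adjoin F ((c : Set A) ∪ n) = Algebra.adjoin F s := by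
  classical
  have := charP_of_injective_algebraMap' F (A := A) 2
  induction s using Finset.induction_on with
  | empty =>
    refine ⟨∅, ∅, le_rfl, by simp, ?_, by simp⟩
    rw [Finset.coe_empty, Algebra.adjoin_empty]
    exact (Algebra.botEquiv F A).toMulEquiv.isField (Field.toIsField F)
  | insert x s hxs ih =>
    obtain ⟨c, n, hcard, hn, hc, hcn⟩ := ih
    rw [Finset.coe_insert, ← Algebra.adjoin_insert_congr hcn, Finset.card_insert_of_notMem hxs]
    by_cases hsq : ∃ w ∈ Algebra.adjoin F (c : Set A), w ^ 2 = x ^ 2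
    · obtain ⟨w, hw, hwx⟩ := hsq
      refine ⟨c, insert (x + w) n, ?_, ?_, hc, ?_⟩
      · have := Finset.card_insert_le (x + w) n
        omega
      · intro y hy
        rcases Finset.mem_insert.mp hy with rfl | hy
        · rw [CharTwo.add_sq, hwx, CharTwo.add_self_eq_zero]
        · exact hn y hy
      · rw [Finset.coe_insert, Set.union_insert,
          Algebra.adjoin_insert_add_of_mem (Algebra.adjoin_mono Set.subset_union_left hw)]
    · refine ⟨insert x c, n, ?_, hn, ?_, ?_⟩
      · have := Finset.card_insert_le x c
        omega
      · rw [Finset.coe_insert, ← Algebra.adjoin_insert_adjoin]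
        exact hA.isField_adjoin_insert hc fun w hw hwx ↦ hsq ⟨w, hw, hwx⟩
      · rw [Finset.coe_insert, Set.insert_union]

end SplitGenerators

-- `F[c]` is a field and the `n` are square-zero, so the dimension count says that `A` is
-- `F[c] ⊗ F[ε₁, …, εₘ]` with `εⱼ ^ 2 = 0`.
structure IsNormalGenerators (F : Type*) {A : Type*} [Field F] [CommRing A] [Algebra F A]
    (c n : Finset A) : Prop where
  sq_eq_zero : ∀ y ∈ n, y ^ 2 = 0
  isField_adjoin : IsField (Algebra.adjoin F (c : Set A))
  adjoin_union : Algebra.adjoin F ((c : Set A) ∪ n) = ⊤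
  finrank_eq : finrank F A = 2 ^ (c.card + n.card)

section NormalGenerators

variable {F A A' : Type*} [Field F] [CommRing A] [Algebra F A] [CommRing A'] [Algebra F A']

theorem adjoin_range_sumElim_coe (c n : Finset A) :
    Algebra.adjoin F (Set.range (Sum.elim ((↑) : c → A) ((↑) : n → A)))
      = Algebra.adjoin F ((c : Set A) ∪ n) := by
  rw [Set.Sum.elim_range, Subtype.range_coe, Subtype.range_coe]

theorem IsTotallySingularConic.exists_isNormalGenerators [CharP F 2] [Nontrivial A]
    [FiniteDimensional F A] (hA : IsTotallySingularConic F A)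
    (hdim : finrank F A = 2 ^ minRank F A) : ∃ c n : Finset A, IsNormalGenerators F c n := by
  have hne : {r | ∃ s : Finset A, s.card = r ∧ Algebra.adjoin F (s : Set A) = ⊤}.Nonempty := by
    obtain ⟨s, hs⟩ := Algebra.FiniteType.out (R := F) (A := A)
    exact ⟨s.card, s, rfl, hs⟩
  obtain ⟨s, hs, hsgen⟩ := Nat.sInf_mem hne
  obtain ⟨c, n, hcard, hn, hc, hcn⟩ := hA.exists_split_generators s
  have hgen := (adjoin_range_sumElim_coe c n).trans (hcn.trans hsgen)
  refine ⟨c, n, hn, hc, hcn.trans hsgen, le_antisymm ?_ ?_⟩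
  · simpa using finrank_le_two_pow_of_adjoin_eq_top (fun _ ↦ hA _) hgen
  · rw [hdim]
    exact Nat.pow_le_pow_right two_pos (hcard.trans hs.le)

namespace IsNormalGenerators

variable {c n : Finset A}

theorem adjoin_range_sumElim (h : IsNormalGenerators F c n) :
    Algebra.adjoin F (Set.range (Sum.elim ((↑) : c → A) ((↑) : n → A))) = ⊤ :=
  (adjoin_range_sumElim_coe c n).trans h.adjoin_union

theorem squareValues_adjoin [CharP F 2] [Nontrivial A] (h : IsNormalGenerators F c n) :
    squareValues F (Algebra.adjoin F (c : Set A)) = squareValues F A :=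
  (squareValues_subset_of_algHom (Subalgebra.val _)).antisymm fun _ ⟨x, hx⟩ ↦ by
    obtain ⟨w, hw, hwx⟩ := exists_sq_eq_of_mem_adjoin_union (F := F) h.sq_eq_zero
      (h.adjoin_union ▸ Algebra.mem_top : x ∈ _)
    exact mem_squareValues_subalgebra.mpr ⟨w, hw, hwx.trans hx⟩

theorem finrank_adjoin (hA : IsTotallySingularConic F A) (h : IsNormalGenerators F c n) :
    finrank F (Algebra.adjoin F (c : Set A)) = 2 ^ c.card := by
  obtain ⟨b, hb⟩ := exists_basis_eq_prod (fun _ ↦ hA _) h.adjoin_range_sumElim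
    (by rw [h.finrank_eq, Fintype.card_sum, Fintype.card_coe, Fintype.card_coe])
  have hli : LinearIndependent F fun U : Finset c ↦ ∏ i ∈ U, (i : A) := by
    convert b.linearIndependent.comp _ (Finset.map_injective Function.Embedding.inl) using 1
    ext U
    simp [hb, Finset.prod_map]
  have hc : Set.range ((↑) : c → A) = c := Subtype.range_coe
  rw [← hc, finrank_adjoin_range_of_linearIndependent (fun _ ↦ hA _) hli, Fintype.card_coe]

-- Transporting the generators `c` through `Ψ` and matching `n` with `n'` gives generators of
-- `A'` with the same squares as those of `A`.
theorem nonempty_algEquiv (hA : IsTotallySingularConic F A) (hA' : IsTotallySingularConic F A')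
    {c' n' : Finset A'} (h : IsNormalGenerators F c n) (h' : IsNormalGenerators F c' n')
    (Ψ : Algebra.adjoin F (c : Set A) ≃ₐ[F] Algebra.adjoin F (c' : Set A'))
    (hdim : finrank F A = finrank F A') : Nonempty (A ≃ₐ[F] A') := by
  have hc : c.card = c'.card := Nat.pow_right_injective le_rfl <| by
    show 2 ^ c.card = 2 ^ c'.card
    rw [← h.finrank_adjoin hA, ← h'.finrank_adjoin hA', Ψ.toLinearEquiv.finrank_eq]
  have hn : n.card = n'.card := by
    have := Nat.pow_right_injective le_rfl (h.finrank_eq.symm.trans (hdim.trans h'.finrank_eq))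
    omega
  let e : n ≃ n' := Fintype.equivOfCardEq (by simpa using hn)
  choose d hd using fun i : c ↦ hA i
  let φ : Algebra.adjoin F (c : Set A) →ₐ[F] A' := (Subalgebra.val _).comp Ψ.toAlgHom
  let z' : c ⊕ n → A' := Sum.elim (fun i ↦ φ ⟨i, Algebra.subset_adjoin i.2⟩) fun j ↦ e j
  have hφ : φ.range = Algebra.adjoin F (c' : Set A') := by
    rw [AlgHom.range_comp, (AlgHom.range_eq_top _).mpr Ψ.surjective, Algebra.map_top,
      Subalgebra.range_val]
  have hgen' : Algebra.adjoin F (Set.range z') = ⊤ := by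
    rw [eq_top_iff, ← h'.adjoin_union, Algebra.adjoin_le_iff]
    rintro y (hy | hy)
    · have hyφ : y ∈ φ.range := hφ ▸ Algebra.subset_adjoin hy
      rw [← Algebra.map_top, ← Algebra.adjoin_adjoin_coe_preimage, AlgHom.map_adjoin] at hyφ
      refine Algebra.adjoin_mono ?_ hyφ
      rintro _ ⟨u, hu, rfl⟩
      exact ⟨Sum.inl ⟨u, hu⟩, rfl⟩
    · exact Algebra.subset_adjoin ⟨Sum.inr (e.symm ⟨y, hy⟩), by simp [z']⟩
  refine nonempty_algEquiv_of_generators (z := Sum.elim ((↑) : c → A) ((↑) : n → A)) (z' := z')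
    (d := Sum.elim d fun _ ↦ 0)
    ?_ ?_ h.adjoin_range_sumElim hgen' ?_ ?_
  · rintro (i | j)
    · exact hd i
    · simp [h.sq_eq_zero j j.2]
  · rintro (i | j)
    · have hsq : (⟨i, Algebra.subset_adjoin i.2⟩ : Algebra.adjoin F (c : Set A)) ^ 2
          = algebraMap F _ (d i) := Subtype.ext (by simpa using hd i)
      simp only [z', Sum.elim_inl, ← map_pow, hsq, AlgHom.commutes]
    · simp [z', h'.sq_eq_zero _ (e j).2]
  · rw [h.finrank_eq, Fintype.card_sum, Fintype.card_coe, Fintype.card_coe]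
  · rw [← hdim, h.finrank_eq, Fintype.card_sum, Fintype.card_coe, Fintype.card_coe]

end IsNormalGenerators
end NormalGenerators

theorem stmt_7 (F R R' : Type*) [Field F] [CharP F 2]
    [CommRing R] [Algebra F R] [FiniteDimensional F R] [Nontrivial R]
    [CommRing R'] [Algebra F R'] [FiniteDimensional F R'] [Nontrivial R']
    (hconic : ∀ x : R, ∃ a : F, x ^ 2 = algebraMap F R a)
    (hconic' : ∀ x : R', ∃ a : F, x ^ 2 = algebraMap F R' a)
    (hdim : Module.finrank F R = 2 ^ minRank F R)
    (hdim' : Module.finrank F R' = 2 ^ minRank F R')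
    -- `K` is a maximal subfield of `R` containing `F`
    (K : Subalgebra F R) (hKfield : IsField K)
    (hKmax : ∀ K₁ : Subalgebra F R, IsField K₁ → K ≤ K₁ → K = K₁)
    -- `K'` is a maximal subfield of `R'` containing `F`
    (K' : Subalgebra F R') (hK'field : IsField K')
    (hK'max : ∀ K₁ : Subalgebra F R', IsField K₁ → K' ≤ K₁ → K' = K₁) :
    Nonempty (R ≃ₐ[F] R') ↔
      (Module.finrank F R = Module.finrank F R' ∧ Nonempty (K ≃ₐ[F] K')) := by
  have hA : IsTotallySingularConic F R := hconic
  have hA' : IsTotallySingularConic F R' := hconic'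
  have hKsq := hA.squareValues_eq_of_isMaximal hKfield hKmax
  have hK'sq := hA'.squareValues_eq_of_isMaximal hK'field hK'max
  have := hKfield.isDomain
  have := hK'field.isDomain
  constructor
  · rintro ⟨e⟩
    refine ⟨e.toLinearEquiv.finrank_eq, (hA.subalgebra K).nonempty_algEquiv (hA'.subalgebra K') ?_⟩
    rw [hKsq, hK'sq, squareValues_congr e]
  · rintro ⟨hfin, ⟨ψ⟩⟩
    obtain ⟨c, n, h⟩ := hA.exists_isNormalGenerators hdim
    obtain ⟨c', n', h'⟩ := hA'.exists_isNormalGenerators hdim'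
    have := h.isField_adjoin.isDomain
    have := h'.isField_adjoin.isDomain
    obtain ⟨e⟩ := (hA.subalgebra _).nonempty_algEquiv (hA.subalgebra K)
      (by rw [h.squareValues_adjoin, hKsq])
    obtain ⟨e'⟩ := (hA'.subalgebra K').nonempty_algEquiv (hA'.subalgebra _)
      (by rw [h'.squareValues_adjoin, hK'sq])
    exact h.nonempty_algEquiv hA hA' h' (e.trans (ψ.trans e')) hfin
end
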